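/- Let 0<γ≤1 and let h ∈ L¹(ℝⁿ) be supported in a cube Q centered at c with side length ℓ(Q) and satisfy ∫_{ℝⁿ} h = 0. Then there is a constant C>0, depending only on n and γ, such that for every x ∉ 2√n·Q (the cube concentric with Q of side length 2√n·ℓ(Q)), S_γ(h)(x) ≤ C · (ℓ(Q)^γ / |x−c|^{n+γ}) · ∫_Q |h(z)| dz. -/

import Mathlib

open MeasureTheory Metric Set
open scoped ENNReal NNReal Real

noncomputable section

/-- Euclidean space `ℝⁿ`. -/
abbrev En (n : ℕ) := EuclideanSpace ℝ (Fin n)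

/-- The weighted measure `w(s) = ∫_s w` of a set. -/
def wMeas {n : ℕ} (w : En n → ℝ) (s : Set (En n)) : ℝ≥0∞ :=
  ∫⁻ x in s, ENNReal.ofReal (w x)

/-- A weight: a positive locally integrable function. -/
def IsWeight {n : ℕ} (w : En n → ℝ) : Prop :=
  LocallyIntegrable w volume ∧ ∀ x, 0 < w x

/-- Average of a weight over a ball (lower-integral version). -/
def ballAvg {n : ℕ} (w : En n → ℝ) (y : En n) (r : ℝ) : ℝ≥0∞ :=
  wMeas w (ball y r) / volume (ball y r)

/-- The Muckenhoupt class `A_p`, `1 < p < ∞`. -/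
def IsAp {n : ℕ} (w : En n → ℝ) (p : ℝ) : Prop :=
  IsWeight w ∧ ∃ C : ℝ, 0 < C ∧ ∀ (y : En n) (r : ℝ), 0 < r →
    (ballAvg w y r) ^ (1 / p) *
      (ballAvg (fun x => w x ^ (-(1 / (p - 1)))) y r) ^ (1 - 1 / p) ≤ ENNReal.ofReal C

/-- The Muckenhoupt class `A₁`. -/
def IsA1 {n : ℕ} (w : En n → ℝ) : Prop :=
  IsWeight w ∧ ∃ C : ℝ, 0 < C ∧ ∀ (y : En n) (r : ℝ), 0 < r →
    ballAvg w y r ≤ ENNReal.ofReal C *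
      ENNReal.ofReal (essInf w (volume.restrict (ball y r)))

/-- `A_∞ = ⋃_{1 ≤ p < ∞} A_p`. -/
def IsAinfty {n : ℕ} (w : En n → ℝ) : Prop :=
  IsA1 w ∨ ∃ p : ℝ, 1 < p ∧ IsAp w p

/-- The doubling class `Δ₂`: `μ(2B) ≤ C μ(B)` for all balls. -/
def IsDoubling {n : ℕ} (μ : En n → ℝ) : Prop :=
  IsWeight μ ∧ ∃ C : ℝ, 0 < C ∧ ∀ (y : En n) (r : ℝ), 0 < r →
    wMeas μ (ball y (2 * r)) ≤ ENNReal.ofReal C * wMeas μ (ball y r)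

/-- The family `C_γ` of kernels: supported in the unit ball, mean zero,
`γ`-Hölder with constant 1. -/
def Cfam (n : ℕ) (γ : ℝ) : Set (En n → ℝ) :=
  {φ | Function.support φ ⊆ closedBall 0 1 ∧ (∫ x, φ x) = 0 ∧
    ∀ x x' : En n, |φ x - φ x'| ≤ ‖x - x'‖ ^ γ}

/-- `L¹` dilation `φ_t(y) = t^{-n} φ(y/t)`. -/
def dil {n : ℕ} (φ : En n → ℝ) (t : ℝ) (y : En n) : ℝ :=
  t ^ (-(n : ℝ)) * φ (t⁻¹ • y)

/-- `A_γ(f)(y,t) = sup_{φ ∈ C_γ} |φ_t * f(y)|`. -/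
def Agamma {n : ℕ} (γ : ℝ) (f : En n → ℝ) (y : En n) (t : ℝ) : ℝ :=
  ⨆ φ ∈ Cfam n γ, |∫ z, dil φ t (y - z) * f z|

/-- Square integral of `F(y,t)` over the cone `Γ(x)`, against `dy dt / t^{n+1}`. -/
def coneInt {n : ℕ} (F : En n → ℝ → ℝ) (x : En n) : ℝ≥0∞ :=
  (∫⁻ p : En n × ℝ,
    Set.indicator {q : En n × ℝ | dist x q.1 < q.2}
      (fun q => ENNReal.ofReal (F q.1 q.2) ^ 2 / ENNReal.ofReal (q.2 ^ ((n : ℝ) + 1))) p)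
    ^ (1 / 2 : ℝ)

/-- The intrinsic square function `S_γ(f)`. -/
def Sgamma {n : ℕ} (γ : ℝ) (f : En n → ℝ) (x : En n) : ℝ≥0∞ :=
  coneInt (Agamma γ f) x

/-- `(Σ_j |S_γ(f_j)(x)|²)^{1/2}`. -/
def Sl2 {n : ℕ} (γ : ℝ) (f : ℕ → En n → ℝ) (x : En n) : ℝ≥0∞ :=
  (∑' j, Sgamma γ (f j) x ^ 2) ^ (1 / 2 : ℝ)

/-- `‖f⃗(x)‖_{ℓ²} = (Σ_j |f_j(x)|²)^{1/2}`. -/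
def l2 {n : ℕ} (f : ℕ → En n → ℝ) (x : En n) : ℝ≥0∞ :=
  (∑' j, ENNReal.ofReal |f j x| ^ 2) ^ (1 / 2 : ℝ)

/-- Weighted `L^p` norm of an `ℝ≥0∞`-valued function (`p` finite). -/
def wLp {n : ℕ} (w : En n → ℝ) (p : ℝ) (g : En n → ℝ≥0∞) : ℝ≥0∞ :=
  (∫⁻ x, g x ^ p * ENNReal.ofReal (w x)) ^ (1 / p)

/-- Weighted `L^p` norm restricted to a set. -/
def wLpOn {n : ℕ} (w : En n → ℝ) (p : ℝ) (s : Set (En n)) (g : En n → ℝ≥0∞) : ℝ≥0∞ :=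
  (∫⁻ x in s, g x ^ p * ENNReal.ofReal (w x)) ^ (1 / p)

/-- Weighted weak `L^p` quasi-norm. -/
def wWeakLp {n : ℕ} (w : En n → ℝ) (p : ℝ) (g : En n → ℝ≥0∞) : ℝ≥0∞ :=
  ⨆ (lam : ℝ) (_ : 0 < lam),
    ENNReal.ofReal lam * wMeas w {x | ENNReal.ofReal lam < g x} ^ (1 / p)

/-- Weighted weak `L^p` quasi-norm restricted to a set. -/
def wWeakLpOn {n : ℕ} (w : En n → ℝ) (p : ℝ) (s : Set (En n)) (g : En n → ℝ≥0∞) : ℝ≥0∞ :=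
  ⨆ (lam : ℝ) (_ : 0 < lam),
    ENNReal.ofReal lam * wMeas w {x | x ∈ s ∧ ENNReal.ofReal lam < g x} ^ (1 / p)

/-- `L^q` norm (with exponent `q ∈ (0,∞]`, usual modification at `∞`) of an
`ℝ≥0∞`-valued function with respect to a measure. -/
def lqNorm {n : ℕ} (ν : Measure (En n)) (q : ℝ≥0∞) (F : En n → ℝ≥0∞) : ℝ≥0∞ :=
  if q = ∞ then essSup F ν else (∫⁻ y, F y ^ q.toReal ∂ν) ^ (1 / q.toReal)

/-- The measure `μ(y) dy`. -/
def muDens {n : ℕ} (μ : En n → ℝ) : Measure (En n) :=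
  volume.withDensity fun y => ENNReal.ofReal (μ y)

/-- The weighted amalgam norm `‖·‖_{(L^p,L^q)^α(w;μ)}`. -/
def amalgamNorm {n : ℕ} (w μ : En n → ℝ) (p α : ℝ) (q : ℝ≥0∞) (g : En n → ℝ≥0∞) : ℝ≥0∞ :=
  ⨆ (r : ℝ) (_ : 0 < r),
    lqNorm (muDens μ) q fun y =>
      wMeas w (ball y r) ^ (1 / α - 1 / p - (q⁻¹).toReal) * wLpOn w p (ball y r) g

/-- The weighted weak amalgam norm `‖·‖_{(WL^p,L^q)^α(w;μ)}`. -/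
def amalgamWeakNorm {n : ℕ} (w μ : En n → ℝ) (p α : ℝ) (q : ℝ≥0∞) (g : En n → ℝ≥0∞) : ℝ≥0∞ :=
  ⨆ (r : ℝ) (_ : 0 < r),
    lqNorm (muDens μ) q fun y =>
      wMeas w (ball y r) ^ (1 / α - 1 / p - (q⁻¹).toReal) * wWeakLpOn w p (ball y r) g

/-- `sup_{φ ∈ C_γ} |∫ [b(x) - b(z)] φ_t(y-z) f(z) dz|`. -/
def AgammaComm {n : ℕ} (γ : ℝ) (b f : En n → ℝ) (x y : En n) (t : ℝ) : ℝ :=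
  ⨆ φ ∈ Cfam n γ, |∫ z, (b x - b z) * dil φ t (y - z) * f z|

/-- The commutator `[b, S_γ](f)`. -/
def commS {n : ℕ} (γ : ℝ) (b f : En n → ℝ) (x : En n) : ℝ≥0∞ :=
  coneInt (AgammaComm γ b f x) x

/-- `(Σ_j |[b,S_γ](f_j)(x)|²)^{1/2}`. -/
def commSl2 {n : ℕ} (γ : ℝ) (b : En n → ℝ) (f : ℕ → En n → ℝ) (x : En n) : ℝ≥0∞ :=
  (∑' j, commS γ b (f j) x ^ 2) ^ (1 / 2 : ℝ)

/-- Average of `b` over the ball `B(y,r)`. -/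
def ballAvgF {n : ℕ} (b : En n → ℝ) (y : En n) (r : ℝ) : ℝ :=
  ⨍ x in ball y r, b x

/-- `b ∈ BMO(ℝⁿ)` with `‖b‖_* ≤ M` (over balls). -/
def IsBMOwith {n : ℕ} (b : En n → ℝ) (M : ℝ) : Prop :=
  LocallyIntegrable b volume ∧
  ∀ (y : En n) (r : ℝ), 0 < r →
    (⨍ x in ball y r, |b x - ballAvgF b y r|) ≤ M

/-- The Young function `Φ(t) = t(1 + log⁺ t)` on `ℝ≥0∞`. -/
def PhiE (t : ℝ≥0∞) : ℝ≥0∞ :=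
  t * (1 + ENNReal.ofReal (max (Real.log t.toReal) 0))

/-- Weighted Luxemburg norm `‖g‖_{L log L(w), s}`. -/
def luxLlogL {n : ℕ} (w : En n → ℝ) (s : Set (En n)) (g : En n → ℝ≥0∞) : ℝ≥0∞ :=
  sInf {c : ℝ≥0∞ | 0 < c ∧ c ≠ ∞ ∧
    (∫⁻ x in s, PhiE (g x / c) * ENNReal.ofReal (w x)) ≤ wMeas w s}

/-- The weighted amalgam norm of `L log L` type, `‖·‖_{(L log L, L^q)^α(w;μ)}`. -/
def amalgamLlogL {n : ℕ} (w μ : En n → ℝ) (α : ℝ) (q : ℝ≥0∞) (g : En n → ℝ≥0∞) : ℝ≥0∞ :=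
  ⨆ (r : ℝ) (_ : 0 < r),
    lqNorm (muDens μ) q fun y =>
      wMeas w (ball y r) ^ (1 / α - (q⁻¹).toReal) * luxLlogL w (ball y r) g

/-- The centered Hardy–Littlewood maximal function. -/
def HLmax {n : ℕ} (w : En n → ℝ) (x : En n) : ℝ≥0∞ :=
  ⨆ (r : ℝ) (_ : 0 < r), ballAvg (fun z => |w z|) x r

/-- Axis-parallel cube with center `c` and side length `L`. -/
def cube {n : ℕ} (c : En n) (L : ℝ) : Set (En n) := {x | ∀ i, |x i - c i| ≤ L / 2}

/-- Average of `b` over the cube of center `c` and side `L`. -/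
def cubeAvgF {n : ℕ} (b : En n → ℝ) (c : En n) (L : ℝ) : ℝ :=
  ⨍ x in cube c L, b x

/-- `b ∈ BMO(ℝⁿ)` with `‖b‖_* ≤ M` (over cubes). -/
def IsBMOcubeWith {n : ℕ} (b : En n → ℝ) (M : ℝ) : Prop :=
  LocallyIntegrable b volume ∧
  ∀ (c : En n) (L : ℝ), 0 < L →
    (⨍ x in cube c L, |b x - cubeAvgF b c L|) ≤ M

/-- Weighted Luxemburg norm `‖g‖_{exp L(w), s}` for the Young function `e^t - 1`. -/
def luxExpL {n : ℕ} (w : En n → ℝ) (s : Set (En n)) (g : En n → ℝ) : ℝ≥0∞ :=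
  sInf ((fun σ : ℝ => ENNReal.ofReal σ) ''
    {σ : ℝ | 0 < σ ∧
      (∫⁻ x in s, ENNReal.ofReal (Real.exp (|g x| / σ) - 1) * ENNReal.ofReal (w x))
        ≤ wMeas w s})

/-- `sup_{φ ∈ C_γ} |φ_t * g(y)|` for a complex-valued `g`. -/
def AgammaC {n : ℕ} (γ : ℝ) (g : En n → ℂ) (y : En n) (t : ℝ) : ℝ :=
  ⨆ φ ∈ Cfam n γ, ‖∫ z, (dil φ t (y - z) : ℂ) * g z‖

/-- The intrinsic square function of a complex-valued function. -/
def SgammaC {n : ℕ} (γ : ℝ) (g : En n → ℂ) (x : En n) : ℝ≥0∞ :=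
  coneInt (AgammaC γ g) x

/-!
Since `h` has mean zero, `φ_t * h(y) = ∫ (φ_t(y - z) - φ_t(y - c)) h(z) dz`, and the Hölder
condition on `φ` bounds `A_γ(h)(y, t)` by `t^{-(n+γ)} R^γ ‖h‖₁`, where `R = √n ℓ / 2` is the
radius of a ball around `c` containing `Q`. For `(y, t)` in the cone `Γ(x)` with
`t ≤ |x - c| / 4` the ball `B(y, t)` misses `Q`, so `A_γ(h)(y, t) = 0`. Only `t > |x - c| / 4`
contributes, and since the slice of `Γ(x)` at height `t` is a ball of volume `|B(0,1)| tⁿ`,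
`S_γ(h)(x)² ≲ R^{2γ} ‖h‖₁² ∫_{|x-c|/4}^∞ t^{-2(n+γ)-1} dt ≍ R^{2γ} ‖h‖₁² |x - c|^{-2(n+γ)}`.
-/

open Filter Topology

lemma continuous_of_abs_sub_le_norm_rpow {E : Type*} [SeminormedAddCommGroup E] {γ : ℝ}
    (hγ : 0 < γ) {φ : E → ℝ} (hφ : ∀ a b, |φ a - φ b| ≤ ‖a - b‖ ^ γ) : Continuous φ := by
  refine continuous_iff_continuousAt.2 fun a => tendsto_iff_norm_sub_tendsto_zero.2 ?_
  have hnorm : Tendsto (fun b => ‖b - a‖ ^ γ) (𝓝 a) (𝓝 0) := by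
    simpa [Real.zero_rpow hγ.ne'] using
      (tendsto_iff_norm_sub_tendsto_zero.1 tendsto_id).rpow_const (Or.inr hγ.le)
  exact squeeze_zero (fun _ => norm_nonneg _) (fun b => hφ b a) hnorm

lemma lt_norm_sub_of_notMem_cube {n : ℕ} {c x : En n} {L : ℝ} (hx : x ∉ cube c L) :
    L / 2 < ‖x - c‖ := by
  simp only [cube, mem_ofPred_eq, not_forall, not_le] at hx
  obtain ⟨i, hi⟩ := hx
  calc L / 2 < ‖(x - c) i‖ := by simpa using hi
    _ ≤ ‖x - c‖ := PiLp.norm_apply_le _ i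

lemma cube_subset_closedBall {n : ℕ} (c : En n) {L : ℝ} (hL : 0 ≤ L) :
    cube c L ⊆ closedBall c (√n * L / 2) := by
  intro z hz
  rw [mem_closedBall, dist_eq_norm, EuclideanSpace.norm_eq]
  calc √(∑ i, ‖(z - c) i‖ ^ 2) ≤ √(∑ _i : Fin n, (L / 2) ^ 2) := by
        gcongr with i
        simpa using hz i
    _ = √n * L / 2 := by
        rw [Finset.sum_const, Finset.card_univ, Fintype.card_fin, nsmul_eq_mul,
          Real.sqrt_mul n.cast_nonneg, Real.sqrt_sq (by positivity), mul_div_assoc]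

lemma dil_eq_zero_of_lt_norm {n : ℕ} {φ : En n → ℝ} (hφ : Function.support φ ⊆ closedBall 0 1)
    {t : ℝ} (ht : 0 < t) {w : En n} (hw : t < ‖w‖) : dil φ t w = 0 := by
  have hout : t⁻¹ • w ∉ closedBall (0 : En n) 1 := by
    rw [mem_closedBall, dist_zero_right, norm_smul, Real.norm_of_nonneg (inv_nonneg.2 ht.le),
      not_le, ← div_eq_inv_mul, one_lt_div ht]
    exact hw
  rw [dil, Function.notMem_support.1 (fun h => hout (hφ h)), mul_zero]

lemma continuous_dil {n : ℕ} {φ : En n → ℝ} (hφ : Continuous φ) (t : ℝ) :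
    Continuous (dil φ t) :=
  continuous_const.mul (hφ.comp (continuous_const_smul _))

lemma abs_dil_sub_dil_le {n : ℕ} {γ : ℝ} {φ : En n → ℝ}
    (hφ : ∀ a b, |φ a - φ b| ≤ ‖a - b‖ ^ γ) {t : ℝ} (ht : 0 < t) (a b : En n) :
    |dil φ t a - dil φ t b| ≤ t ^ (-((n : ℝ) + γ)) * ‖a - b‖ ^ γ := by
  calc |dil φ t a - dil φ t b| = t ^ (-(n : ℝ)) * |φ (t⁻¹ • a) - φ (t⁻¹ • b)| := by
        rw [dil, dil, ← mul_sub, abs_mul, abs_of_pos (Real.rpow_pos_of_pos ht _)]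
    _ ≤ t ^ (-(n : ℝ)) * (t⁻¹ * ‖a - b‖) ^ γ := by
        gcongr
        refine (hφ _ _).trans_eq ?_
        rw [← smul_sub, norm_smul, Real.norm_of_nonneg (inv_nonneg.2 ht.le)]
    _ = t ^ (-((n : ℝ) + γ)) * ‖a - b‖ ^ γ := by
        rw [Real.mul_rpow (inv_nonneg.2 ht.le) (norm_nonneg _), Real.inv_rpow ht.le,
          ← Real.rpow_neg ht.le, neg_add, Real.rpow_add ht, mul_assoc]

lemma abs_integral_dil_mul_le_of_integral_eq_zero {n : ℕ} {γ : ℝ} (hγ : 0 < γ)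
    {φ : En n → ℝ} (hφ : φ ∈ Cfam n γ) {h : En n → ℝ} {c : En n} {R : ℝ}
    (hint : Integrable h) (hsupp : Function.support h ⊆ closedBall c R)
    (hmean : ∫ z, h z = 0) (y : En n) {t : ℝ} (ht : 0 < t) :
    |∫ z, dil φ t (y - z) * h z| ≤ t ^ (-((n : ℝ) + γ)) * R ^ γ * ∫ z, |h z| := by
  set K := t ^ (-((n : ℝ) + γ)) * R ^ γ
  have hker : ∀ z, |(dil φ t (y - z) - dil φ t (y - c)) * h z| ≤ K * |h z| := by
    intro z
    rw [abs_mul]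
    by_cases hz : h z = 0
    · simp [hz]
    have hzc : ‖c - z‖ ≤ R := by
      rw [← dist_eq_norm, dist_comm]; exact hsupp (Function.mem_support.2 hz)
    gcongr
    calc |dil φ t (y - z) - dil φ t (y - c)| ≤ t ^ (-((n : ℝ) + γ)) * ‖c - z‖ ^ γ := by
          simpa using abs_dil_sub_dil_le hφ.2.2 ht (y - z) (y - c)
      _ ≤ K := by unfold K; gcongr
  have hcont : Continuous fun z => dil φ t (y - z) - dil φ t (y - c) :=
    ((continuous_dil (continuous_of_abs_sub_le_norm_rpow hγ hφ.2.2) t).comp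
      (continuous_sub_left y)).sub continuous_const
  have hdiff : Integrable fun z => (dil φ t (y - z) - dil φ t (y - c)) * h z :=
    (hint.abs.const_mul K).mono' (hcont.aestronglyMeasurable.mul hint.aestronglyMeasurable)
      (Eventually.of_forall hker)
  have hcentre : ∫ z, dil φ t (y - z) * h z = ∫ z, (dil φ t (y - z) - dil φ t (y - c)) * h z := by
    have hsplit : (fun z => dil φ t (y - z) * h z) =
        fun z => (dil φ t (y - z) - dil φ t (y - c)) * h z + dil φ t (y - c) * h z := by
      funext z; ring
    rw [hsplit, integral_add hdiff (hint.const_mul _), integral_const_mul, hmean, mul_zero,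
      add_zero]
  rw [hcentre, ← integral_const_mul]
  exact (abs_integral_le_integral_abs).trans (integral_mono_of_nonneg
    (Eventually.of_forall fun _ => abs_nonneg _) (hint.abs.const_mul K)
    (Eventually.of_forall hker))

lemma Agamma_le_of_integral_eq_zero {n : ℕ} {γ : ℝ} (hγ : 0 < γ) {h : En n → ℝ} {c : En n}
    {R : ℝ} (hR : 0 ≤ R) (hint : Integrable h) (hsupp : Function.support h ⊆ closedBall c R)
    (hmean : ∫ z, h z = 0) (y : En n) {t : ℝ} (ht : 0 < t) :
    Agamma γ h y t ≤ t ^ (-((n : ℝ) + γ)) * R ^ γ * ∫ z, |h z| :=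
  Real.iSup_le (fun φ => Real.iSup_le
    (fun hφ => abs_integral_dil_mul_le_of_integral_eq_zero hγ hφ hint hsupp hmean y ht)
    (by positivity)) (by positivity)

lemma Agamma_eq_zero_of_add_lt_dist {n : ℕ} {γ : ℝ} {h : En n → ℝ} {c : En n} {R : ℝ}
    (hsupp : Function.support h ⊆ closedBall c R) {y : En n} {t : ℝ} (ht : 0 < t)
    (hyc : t + R < dist y c) : Agamma γ h y t = 0 := by
  have hvanish : ∀ φ ∈ Cfam n γ, ∀ z, dil φ t (y - z) * h z = 0 := by
    intro φ hφ z
    by_cases hz : h z = 0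
    · rw [hz, mul_zero]
    have hzc : dist z c ≤ R := hsupp (Function.mem_support.2 hz)
    have hyz : t < ‖y - z‖ := by
      rw [← dist_eq_norm]; linarith [dist_triangle y z c]
    rw [dil_eq_zero_of_lt_norm hφ.1 ht hyz, zero_mul]
  simp +contextual [Agamma, hvanish]

lemma lintegral_indicator_cone {E : Type*} [PseudoMetricSpace E] [SecondCountableTopology E]
    [MeasurableSpace E] [BorelSpace E] (μ : Measure E) [SFinite μ] (x : E) {g : ℝ → ℝ≥0∞}
    (hg : Measurable g) :
    ∫⁻ p, {q : E × ℝ | dist x q.1 < q.2}.indicator (g ∘ Prod.snd) p ∂(μ.prod volume) =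
      ∫⁻ t, g t * μ (ball x t) := by
  have hcone : MeasurableSet {q : E × ℝ | dist x q.1 < q.2} :=
    measurableSet_lt (measurable_const.dist measurable_fst) measurable_snd
  rw [lintegral_prod_symm _ ((hg.comp measurable_snd).indicator hcone).aemeasurable]
  congr 1 with t
  have hslice : ∀ y, {q : E × ℝ | dist x q.1 < q.2}.indicator (g ∘ Prod.snd) (y, t) =
      (ball x t).indicator (fun _ => g t) y := by
    intro y
    simp [Set.indicator, dist_comm]
  simp_rw [hslice, lintegral_indicator_const measurableSet_ball]

lemma lintegral_Ioi_ofReal_rpow {τ r : ℝ} (hτ : 0 < τ) (hr : r < -1) :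
    ∫⁻ t in Ioi τ, ENNReal.ofReal (t ^ r) = ENNReal.ofReal (τ ^ (r + 1) / -(r + 1)) := by
  rw [← ofReal_integral_eq_lintegral_ofReal (integrableOn_Ioi_rpow_of_lt hr hτ)
      (ae_restrict_of_forall_mem measurableSet_Ioi fun t ht =>
        Real.rpow_nonneg (hτ.trans ht).le r),
    integral_Ioi_rpow_of_lt hr hτ, neg_div, div_neg]

theorem coneInt_le_of_le_indicator_rpow {n : ℕ} {F : En n → ℝ → ℝ} {x : En n} {τ a B : ℝ}
    (hτ : 0 < τ) (ha : 0 < a) (hB : 0 ≤ B)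
    (hF : ∀ y t, dist x y < t → F y t ≤ (Ioi τ).indicator (fun t => B * t ^ (-a)) t) :
    coneInt F x ≤
      ENNReal.ofReal (B * τ ^ (-a) * √((volume (ball (0 : En n) 1)).toReal / (2 * a))) := by
  set v := volume (ball (0 : En n) 1)
  set K := B * τ ^ (-a) * √(v.toReal / (2 * a))
  set cone := {q : En n × ℝ | dist x q.1 < q.2}
  set g : ℝ → ℝ≥0∞ :=
    (Ioi τ).indicator fun t => ENNReal.ofReal ((B * t ^ (-a)) ^ 2 / t ^ ((n : ℝ) + 1))
  have hg : Measurable g := by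
    refine Measurable.indicator ?_ measurableSet_Ioi
    fun_prop
  have hpt : ∀ p, cone.indicator (fun q => ENNReal.ofReal (F q.1 q.2) ^ 2 /
      ENNReal.ofReal (q.2 ^ ((n : ℝ) + 1))) p ≤ cone.indicator (g ∘ Prod.snd) p := by
    rintro ⟨y, t⟩
    by_cases hyt : dist x y < t
    swap
    · simp [cone, hyt]
    have ht : 0 < t := dist_nonneg.trans_lt hyt
    simp only [cone, indicator_of_mem (show (y, t) ∈ cone from hyt), Function.comp_apply, g]
    by_cases htτ : t ∈ Ioi τ
    · rw [indicator_of_mem htτ, ENNReal.ofReal_div_of_pos (by positivity)]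
      gcongr
      rw [ENNReal.ofReal_pow (by positivity)]
      gcongr
      simpa [indicator_of_mem htτ] using hF y t hyt
    · have hF0 : F y t ≤ 0 := by simpa [indicator_of_notMem htτ] using hF y t hyt
      simp [ENNReal.ofReal_of_nonpos hF0]
  have hball : ∀ t ∈ Ioi τ,
      ENNReal.ofReal ((B * t ^ (-a)) ^ 2 / t ^ ((n : ℝ) + 1)) * volume (ball x t) =
        ENNReal.ofReal (B ^ 2) * v * ENNReal.ofReal (t ^ (-2 * a - 1)) := by
    intro t ht
    have ht0 : 0 < t := hτ.trans ht
    rw [Measure.addHaar_ball_of_pos _ _ ht0, finrank_euclideanSpace_fin, ← mul_assoc,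
      ← ENNReal.ofReal_mul (by positivity), mul_right_comm, ← ENNReal.ofReal_mul (by positivity)]
    congr 2
    rw [Real.rpow_add ht0, Real.rpow_one, show -2 * a - 1 = -a + -a + -1 by ring,
      Real.rpow_add ht0, Real.rpow_add ht0, Real.rpow_neg_one, Real.rpow_natCast]
    field_simp
  have htotal : ∫⁻ t, g t * volume (ball x t) = ENNReal.ofReal (K ^ 2) := by
    have hv : v ≠ ∞ := measure_ball_lt_top.ne
    have hK : K ^ 2 = B ^ 2 * v.toReal * (τ ^ (-2 * a - 1 + 1) / -(-2 * a - 1 + 1)) := by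
      rw [mul_pow, mul_pow, Real.sq_sqrt (by positivity), ← Real.rpow_natCast (τ ^ (-a)),
        ← Real.rpow_mul hτ.le, show -2 * a - 1 + 1 = -a * (2 : ℕ) by push_cast; ring]
      push_cast
      field_simp
    calc ∫⁻ t, g t * volume (ball x t)
        = ∫⁻ t in Ioi τ, ENNReal.ofReal ((B * t ^ (-a)) ^ 2 / t ^ ((n : ℝ) + 1)) *
            volume (ball x t) := by
          rw [← lintegral_indicator measurableSet_Ioi]
          congr 1 with t
          rw [indicator_mul_left]
      _ = ∫⁻ t in Ioi τ, ENNReal.ofReal (B ^ 2) * v * ENNReal.ofReal (t ^ (-2 * a - 1)) :=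
          setLIntegral_congr_fun measurableSet_Ioi hball
      _ = ENNReal.ofReal (K ^ 2) := by
          rw [lintegral_const_mul' _ _ (by finiteness),
            lintegral_Ioi_ofReal_rpow hτ (by linarith), hK, ← ENNReal.ofReal_toReal hv,
            ← ENNReal.ofReal_mul (by positivity), ← ENNReal.ofReal_mul (by positivity),
            ENNReal.toReal_ofReal ENNReal.toReal_nonneg]
  calc coneInt F x ≤ (∫⁻ p, cone.indicator (g ∘ Prod.snd) p) ^ (1 / 2 : ℝ) := by
        unfold coneInt
        exact ENNReal.rpow_le_rpow (lintegral_mono hpt) (by norm_num)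
    _ = ENNReal.ofReal (K ^ 2) ^ (1 / 2 : ℝ) := by
        rw [Measure.volume_eq_prod, lintegral_indicator_cone _ _ hg, htotal]
    _ = ENNReal.ofReal K := by
        rw [ENNReal.ofReal_rpow_of_nonneg (by positivity) (by norm_num), ← Real.sqrt_eq_rpow,
          Real.sqrt_sq (by positivity)]

theorem Sgamma_le_of_support_subset_closedBall {n : ℕ} {γ : ℝ} (hγ : 0 < γ) {h : En n → ℝ}
    {c : En n} {R : ℝ} (hR : 0 ≤ R) (hint : Integrable h)
    (hsupp : Function.support h ⊆ closedBall c R) (hmean : ∫ z, h z = 0) {x : En n}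
    (hRx : 2 * R < dist x c) :
    Sgamma γ h x ≤ ENNReal.ofReal (R ^ γ * (∫ z, |h z|) * (dist x c / 4) ^ (-((n : ℝ) + γ)) *
      √((volume (ball (0 : En n) 1)).toReal / (2 * ((n : ℝ) + γ)))) := by
  refine coneInt_le_of_le_indicator_rpow (by linarith) (by positivity) (by positivity)
    fun y t hyt => ?_
  have ht : 0 < t := dist_nonneg.trans_lt hyt
  by_cases htx : t ∈ Ioi (dist x c / 4)
  · rw [indicator_of_mem htx]
    linarith [Agamma_le_of_integral_eq_zero hγ hR hint hsupp hmean y ht]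
  · rw [indicator_of_notMem htx, Agamma_eq_zero_of_add_lt_dist hsupp ht]
    rw [mem_Ioi, not_lt] at htx
    linarith [dist_triangle x y c]

theorem intrinsic_square_decay_of_atom_general (n : ℕ) (γ : ℝ)
    (hγ0 : 0 < γ) :
    ∃ C : ℝ, 0 < C ∧ ∀ (h : En n → ℝ) (c : En n) (L : ℝ), 0 < L →
      Integrable h volume → Function.support h ⊆ cube c L → (∫ z, h z) = 0 →
      ∀ x : En n, x ∉ cube c (2 * Real.sqrt n * L) →
        Sgamma γ h x ≤
          ENNReal.ofReal (C * (L ^ γ / ‖x - c‖ ^ ((n : ℝ) + γ)) *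
            ∫ z in cube c L, |h z|) := by
  set C₀ := (√n / 2) ^ γ * 4 ^ ((n : ℝ) + γ) *
    √((volume (ball (0 : En n) 1)).toReal / (2 * ((n : ℝ) + γ))) with hC₀
  refine ⟨C₀ + 1, by positivity, fun h c L hL hint hsupp hmean x hx => ?_⟩
  have hRx : 2 * (√n * L / 2) < dist x c := by
    rw [dist_eq_norm]; linarith [lt_norm_sub_of_notMem_cube hx]
  have hA : ∫ z in cube c L, |h z| = ∫ z, |h z| :=
    setIntegral_eq_integral_of_forall_compl_eq_zero fun z hz =>
      abs_eq_zero.2 (Function.notMem_support.1 fun hz' => hz (hsupp hz'))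
  have hscale : (√n * L / 2) ^ γ * (dist x c / 4) ^ (-((n : ℝ) + γ)) =
      (√n / 2) ^ γ * 4 ^ ((n : ℝ) + γ) * (L ^ γ / ‖x - c‖ ^ ((n : ℝ) + γ)) := by
    rw [mul_div_right_comm, Real.mul_rpow (by positivity) hL.le, Real.rpow_neg (by positivity),
      ← Real.inv_rpow (by positivity), inv_div, Real.div_rpow (x := 4) (by norm_num) dist_nonneg,
      dist_eq_norm]
    ring
  calc Sgamma γ h x
      ≤ _ := Sgamma_le_of_support_subset_closedBall hγ0 (by positivity) hint
        (hsupp.trans (cube_subset_closedBall c hL.le)) hmean hRx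
    _ = ENNReal.ofReal (C₀ * (L ^ γ / ‖x - c‖ ^ ((n : ℝ) + γ)) * ∫ z in cube c L, |h z|) := by
        rw [hA, mul_right_comm ((√n * L / 2) ^ γ), hscale, hC₀]
        ring_nf
    _ ≤ _ := by
        gcongr
        linarith

/-- decay of `S_γ(h)` away from the supporting cube of a
mean-zero `h`. -/
theorem intrinsic_square_decay_of_atom (n : ℕ) (γ : ℝ)
    (hγ0 : 0 < γ) (hγ1 : γ ≤ 1) :
    ∃ C : ℝ, 0 < C ∧ ∀ (h : En n → ℝ) (c : En n) (L : ℝ), 0 < L →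
      Integrable h volume → Function.support h ⊆ cube c L → (∫ z, h z) = 0 →
      ∀ x : En n, x ∉ cube c (2 * Real.sqrt n * L) →
        Sgamma γ h x ≤
          ENNReal.ofReal (C * (L ^ γ / ‖x - c‖ ^ ((n : ℝ) + γ)) *
            ∫ z in cube c L, |h z|) :=
  intrinsic_square_decay_of_atom_general n γ hγ0

end
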